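/- Let n ≥ 2 and let i be an integer with 1 ≤ i ≤ n−1. For every permutation p of {1,…,n}, in the minmax tree T^m_p either p_i is an ancestor of p_{i+1}, or p_{i+1} is an ancestor of p_i. -/

import Mathlib

/-- Binary trees with natural-number labels, used to model minmax trees of
permutations. -/
inductive BTree where
  | nil : BTree
  | node : ℕ → BTree → BTree → BTree
deriving DecidableEq, Repr

namespace BTree

/-- The label of the root (if any). -/
def rootVal : BTree → Option ℕ
  | .nil => none
  | .node v _ _ => some v

/-- Whether the value `x` occurs as a label in the tree. -/
def memB : BTree → ℕ → Bool
  | .nil, _ => false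
  | .node v l r, x => (x == v) || memB l x || memB r x

/-- The number of children of the (unique, for permutations) node labelled `x`. -/
def numChildren : BTree → ℕ → ℕ
  | .nil, _ => 0
  | .node v l r, x =>
      if x = v then (if l = .nil then 0 else 1) + (if r = .nil then 0 else 1)
      else numChildren l x + numChildren r x

/-- `x` is a leaf of the tree: it occurs in the tree and has no children. -/
def IsLeaf (t : BTree) (x : ℕ) : Prop := t.memB x = true ∧ t.numChildren x = 0

instance (t : BTree) (x : ℕ) : Decidable (t.IsLeaf x) := by unfold IsLeaf; infer_instance

/-- `childB t x y = true` iff `x` is a child of `y` in `t`, i.e. `x` is the root of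
the left or the right subtree hanging from `y`. -/
def childB : BTree → ℕ → ℕ → Bool
  | .nil, _, _ => false
  | .node v l r, x, y =>
      ((y == v) && (l.rootVal == some x || r.rootVal == some x))
      || childB l x y || childB r x y

/-- `ancB t x y = true` iff `x` is a (strict) ancestor of `y` in `t`, i.e. `y` lies
in a subtree hanging from `x`. -/
def ancB : BTree → ℕ → ℕ → Bool
  | .nil, _, _ => false
  | .node v l r, x, y =>
      ((x == v) && (memB l y || memB r y)) || ancB l x y || ancB r x y

end BTree

/-- `x` is the leftmost-eligible extreme letter of `l`: the minimum or the maximum. -/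
def isExtreme (l : List ℕ) (x : ℕ) : Bool :=
  (l.min? == some x) || (l.max? == some x)

/-- Fuelled construction of the minmax tree of a list of distinct naturals:
split the list as `u ++ [m] ++ v` where `m` is the leftmost of the minimum and
maximum letters, put `m` at the root and recurse on `u` (left) and `v` (right). -/
def mmAux : ℕ → List ℕ → BTree
  | 0, _ => .nil
  | fuel+1, l =>
    if l.isEmpty then .nil
    else
      let k := l.findIdx (isExtreme l)
      .node (l.getD k 0) (mmAux fuel (l.take k)) (mmAux fuel (l.drop (k+1)))

/-- The minmax tree `T^m_p` of a word `l` (with distinct letters). -/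
def minmaxTree (l : List ℕ) : BTree := mmAux l.length l

/-- The word `p_1 p_2 … p_n` on the letters `{1,…,n}` associated to a permutation
`p` of `Fin n`. -/
def permList (n : ℕ) (p : Equiv.Perm (Fin n)) : List ℕ :=
  List.ofFn (fun i => (p i : ℕ) + 1)

/-- The `i`-th entry `p_i` (1-indexed) of the permutation `p`. -/
def entryAt (n : ℕ) (p : Equiv.Perm (Fin n)) (i : ℕ) : ℕ :=
  (permList n p).getD (i - 1) 0

/-
Adjacency in the word survives the recursive splitting: at each node the word is cut as
`u ++ m :: v`, and two adjacent letters either stay adjacent inside `u` or inside `v`, or one of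
them is the root `m` while the other lies in the subtree below it.
-/

namespace List

variable {α : Type*}

theorem pair_infix_of_getElem (l : List α) (j : ℕ) (h : j + 1 < l.length) :
    [l[j], l[j + 1]] <:+: l := by
  refine ⟨l.take j, l.drop (j + 2), ?_⟩
  conv_rhs => rw [← l.take_append_drop j, drop_eq_getElem_cons (by omega),
    drop_eq_getElem_cons h]
  simp

theorem pair_infix_append_cons {x y m : α} {u v : List α} (h : [x, y] <:+: u ++ m :: v) :
    [x, y] <:+: u ∨ (x ∈ u ∧ y = m) ∨ (x = m ∧ y ∈ v) ∨ [x, y] <:+: v := by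
  rcases infix_append_iff_ne_nil.mp h with hu | hmv | ⟨l₁, l₂, h₁, h₂, hl, hs, hp⟩
  · exact Or.inl hu
  · rcases infix_cons_iff.mp hmv with hp | hv
    · obtain ⟨rfl, hy⟩ := cons_prefix_cons.mp hp
      exact Or.inr (Or.inr (Or.inl ⟨rfl, hy.subset (mem_singleton_self y)⟩))
    · exact Or.inr (Or.inr (Or.inr hv))
  · obtain ⟨rfl, rfl⟩ : l₁ = [x] ∧ l₂ = [y] := by
      rcases l₁ with _ | ⟨a, _ | ⟨b, t⟩⟩ <;> rcases l₂ with _ | ⟨c, s⟩ <;> simp_all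
    exact Or.inr (Or.inl ⟨hs.subset (mem_singleton_self x), (cons_prefix_cons.mp hp).1⟩)

end List

theorem exists_mmAux_succ_eq_node (fuel : ℕ) {l : List ℕ} (hl : l ≠ []) :
    ∃ u m v, l = u ++ m :: v ∧ mmAux (fuel + 1) l = .node m (mmAux fuel u) (mmAux fuel v) := by
  set k := l.findIdx (isExtreme l)
  obtain ⟨m, hm⟩ : ∃ m, l.min? = some m :=
    Option.isSome_iff_exists.mp (List.isSome_min?_of_ne_nil hl)
  have hk : k < l.length :=
    List.findIdx_lt_length_of_exists ⟨m, List.min?_mem hm, by simp [isExtreme, hm]⟩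
  refine ⟨l.take k, l[k], l.drop (k + 1), ?_, ?_⟩
  · rw [← List.drop_eq_getElem_cons hk, List.take_append_drop]
  · rw [mmAux, if_neg (by simpa using hl)]
    exact congrArg (BTree.node · _ _) (List.getD_eq_getElem l 0 hk)

theorem memB_mmAux {fuel : ℕ} {l : List ℕ} (hl : l.length ≤ fuel) {x : ℕ} (hx : x ∈ l) :
    (mmAux fuel l).memB x = true := by
  induction fuel generalizing l with
  | zero => simp_all
  | succ fuel ih =>
    obtain ⟨u, m, v, rfl, hT⟩ := exists_mmAux_succ_eq_node fuel (List.ne_nil_of_mem hx)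
    have hu : u.length ≤ fuel := by simp at hl; omega
    have hv : v.length ≤ fuel := by simp at hl; omega
    rw [hT]
    rcases List.mem_append.mp hx with hxu | hxmv
    · simp [BTree.memB, ih hu hxu]
    · rcases List.mem_cons.mp hxmv with rfl | hxv
      · simp [BTree.memB]
      · simp [BTree.memB, ih hv hxv]

theorem ancB_mmAux_of_pair_infix {fuel : ℕ} {l : List ℕ} (hl : l.length ≤ fuel) {x y : ℕ}
    (hxy : [x, y] <:+: l) :
    (mmAux fuel l).ancB x y = true ∨ (mmAux fuel l).ancB y x = true := by
  induction fuel generalizing l with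
  | zero => simp_all [List.eq_nil_of_infix_nil]
  | succ fuel ih =>
    obtain ⟨u, m, v, rfl, hT⟩ :=
      exists_mmAux_succ_eq_node fuel (hxy.ne_nil (List.cons_ne_nil x [y]))
    have hu : u.length ≤ fuel := by simp at hl; omega
    have hv : v.length ≤ fuel := by simp at hl; omega
    rw [hT]
    rcases List.pair_infix_append_cons hxy with hxyu | ⟨hxu, rfl⟩ | ⟨rfl, hyv⟩ | hxyv
    · rcases ih hu hxyu with h | h <;> simp [BTree.ancB, h]
    · simp [BTree.ancB, memB_mmAux hu hxu]
    · simp [BTree.ancB, memB_mmAux hv hyv]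
    · rcases ih hv hxyv with h | h <;> simp [BTree.ancB, h]

theorem adjacent_entries_ancestor_general (n : ℕ) (i : ℕ) (hi1 : 1 ≤ i)
    (hi2 : i ≤ n - 1) (p : Equiv.Perm (Fin n)) :
    (minmaxTree (permList n p)).ancB (entryAt n p i) (entryAt n p (i + 1)) = true ∨
    (minmaxTree (permList n p)).ancB (entryAt n p (i + 1)) (entryAt n p i) = true := by
  have hlen : (permList n p).length = n := List.length_ofFn
  have hi : i - 1 + 1 < (permList n p).length := by omega
  have hx : entryAt n p i = (permList n p)[i - 1] := List.getD_eq_getElem _ 0 (by omega)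
  have hy : entryAt n p (i + 1) = (permList n p)[i - 1 + 1] := by
    rw [entryAt, show i + 1 - 1 = i - 1 + 1 by omega, List.getD_eq_getElem _ 0 hi]
  rw [hx, hy]
  exact ancB_mmAux_of_pair_infix le_rfl (List.pair_infix_of_getElem _ _ hi)

/-- For `n ≥ 2` and `1 ≤ i ≤ n − 1`, in the minmax tree of every
permutation `p` of `{1,…,n}`, either `p_i` is an ancestor of `p_{i+1}` or `p_{i+1}`
is an ancestor of `p_i`. -/
theorem adjacent_entries_ancestor (n : ℕ) (hn : 2 ≤ n) (i : ℕ) (hi1 : 1 ≤ i)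
    (hi2 : i ≤ n - 1) (p : Equiv.Perm (Fin n)) :
    (minmaxTree (permList n p)).ancB (entryAt n p i) (entryAt n p (i + 1)) = true ∨
    (minmaxTree (permList n p)).ancB (entryAt n p (i + 1)) (entryAt n p i) = true :=
  adjacent_entries_ancestor_general n i hi1 hi2 p
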